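/- An ideal I ⊆ ℂ[z_1,…,z_s] is zero-dimensional, i.e. I is a proper ideal and the quotient ℂ[z_1,…,z_s]/I is a finite-dimensional ℂ-vector space, if and only if there exist a finite nonempty set Z ⊂ ℂ^s and nonzero finite-dimensional D-invariant subspaces Q_ζ ⊆ ℂ[z_1,…,z_s], ζ ∈ Z, such that for every polynomial f: f ∈ I if and only if (q(D)f)(ζ) = 0 for all q ∈ Q_ζ and all ζ ∈ Z. -/

import Mathlib

open MvPolynomial

/-- The formal differential operator `∂^{|β|}/∂z^β` applied to a multivariate polynomial. -/
noncomputable def DOp {s : ℕ} (β : Fin s →₀ ℕ) (f : MvPolynomial (Fin s) ℂ) :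
    MvPolynomial (Fin s) ℂ :=
  ∑ δ ∈ f.support,
    MvPolynomial.monomial (δ - β) (f.coeff δ * ∏ j, (Nat.descFactorial (δ j) (β j) : ℂ))

/-- `q(D) f`: the constant coefficient differential operator associated with `q`, applied
to `f`. -/
noncomputable def polyD {s : ℕ} (q f : MvPolynomial (Fin s) ℂ) : MvPolynomial (Fin s) ℂ :=
  ∑ β ∈ q.support, q.coeff β • DOp β f

/-- A subspace `Q` is `D`-invariant if `q(D) p ∈ Q` for every `p ∈ Q` and every polynomial
`q`. -/
def DInvariant {s : ℕ} (Q : Submodule ℂ (MvPolynomial (Fin s) ℂ)) : Prop :=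
  ∀ q : MvPolynomial (Fin s) ℂ, ∀ p ∈ Q, polyD q p ∈ Q

/-!
Write `⟨q, f⟩_ζ = (q(D) f)(ζ)`. At the origin `⟨q, f⟩_0 = ∑ q_β f_β β!`, so the pairing is
nondegenerate and `p(D)` is adjoint to multiplication by `p`; the translation `z ↦ z + ζ`
carries this to any point `ζ`. Let `𝔪_ζ` be the maximal ideal of `ζ`.

If `I` is zero-dimensional, take `Z = V(I)` (finite, as its points are algebra maps
`ℂ[z]/I → ℂ`; nonempty by the Nullstellensatz) and `Q_ζ = {q | ⟨q, I⟩_ζ = 0}`. Adjointness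
makes `Q_ζ` `D`-invariant, nondegeneracy embeds it into the dual of `ℂ[z]/I`, and it contains
`1`. A functional vanishing on `I + 𝔪_ζ ^ N` is `⟨q, ·⟩_ζ` for some `q ∈ Q_ζ`, so a polynomial
killed by all of `Q_ζ` lies in `I + 𝔪_ζ ^ N`. The ideals `𝔪_ζ ^ N` are pairwise coprime and, by
the Nullstellensatz, `∏ 𝔪_ζ ^ N ⊆ (√I) ^ N ⊆ I` for large `N`; hence such a polynomial lies in
`I`.

Conversely, `ℂ[z]/I` embeds into `∏ Q_ζ^*`, and a nonzero `D`-invariant `Q_ζ` contains some `q`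
with `q(0) ≠ 0`, so that `⟨q, 1⟩_ζ ≠ 0` and `1 ∉ I`.
-/

open scoped Nat

namespace Ideal

variable {R : Type*} [CommSemiring R]

theorem sup_mul_sup_le (I A B : Ideal R) : (I ⊔ A) * (I ⊔ B) ≤ I ⊔ A * B := by
  rw [sup_mul, mul_sup, mul_sup]
  exact sup_le (sup_le (le_sup_of_le_left mul_le_left) (le_sup_of_le_left mul_le_left))
    (sup_le (le_sup_of_le_left mul_le_right) le_sup_right)

theorem prod_sup_le_sup_prod {ι : Type*} (I : Ideal R) (J : ι → Ideal R) (t : Finset ι) :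
    ∏ i ∈ t, (I ⊔ J i) ≤ I ⊔ ∏ i ∈ t, J i := by
  classical
  induction t using Finset.induction_on with
  | empty => simp
  | insert a t ha ih =>
    rw [Finset.prod_insert ha, Finset.prod_insert ha]
    exact (mul_mono_right ih).trans (sup_mul_sup_le I _ _)

theorem biInf_sup_le_sup_prod {ι : Type*} (I : Ideal R) {J : ι → Ideal R} {t : Finset ι}
    (hJ : (t : Set ι).Pairwise fun a b => IsCoprime (J a) (J b)) :
    ⨅ i ∈ t, (I ⊔ J i) ≤ I ⊔ ∏ i ∈ t, J i := by
  rw [← prod_eq_iInf_of_pairwise_isCoprime fun a ha b hb hab =>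
    isCoprime_iff_codisjoint.mpr ((hJ ha hb hab).codisjoint.mono le_sup_right le_sup_right)]
  exact prod_sup_le_sup_prod I J t

end Ideal

namespace MvPolynomial

section Translation

variable {σ R : Type*} [CommSemiring R]

noncomputable def translation (ζ : σ → R) : MvPolynomial σ R →ₐ[R] MvPolynomial σ R :=
  aeval fun i => X i + C (ζ i)

@[simp]
theorem translation_X (ζ : σ → R) (i : σ) : translation ζ (X i) = X i + C (ζ i) :=
  aeval_X _ _

theorem translation_comp_translation (ζ η : σ → R) :
    (translation ζ).comp (translation η) = translation (ζ + η) :=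
  algHom_ext fun i => by simp [add_assoc]

@[simp]
theorem eval_translation (x ζ : σ → R) (f : MvPolynomial σ R) :
    eval x (translation ζ f) = eval (x + ζ) f := by
  induction f using MvPolynomial.induction_on with
  | C a => simp [translation]
  | add p q hp hq => simp [hp, hq]
  | mul_X p j hp => simp [hp]

theorem pderiv_translation (ζ : σ → R) (i : σ) (f : MvPolynomial σ R) :
    pderiv i (translation ζ f) = translation ζ (pderiv i f) := by
  classical
  induction f using MvPolynomial.induction_on with
  | C a => simp [translation]
  | add p q hp hq => simp only [map_add, hp, hq]
  | mul_X p j hp =>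
    simp only [map_mul, pderiv_mul, map_add, hp, translation_X, pderiv_C, add_zero, pderiv_X,
      Pi.single_apply]
    split_ifs <;> simp

end Translation

section

variable {σ R : Type*} [CommRing R]

@[simp]
theorem translation_neg_translation (ζ : σ → R) (f : MvPolynomial σ R) :
    translation (-ζ) (translation ζ f) = f := by
  have h0 : translation (0 : σ → R) = AlgHom.id R _ := algHom_ext fun i => by simp
  rw [← AlgHom.comp_apply, translation_comp_translation, neg_add_cancel, h0, AlgHom.id_apply]

@[simp]
theorem translation_translation_neg (ζ : σ → R) (f : MvPolynomial σ R) :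
    translation ζ (translation (-ζ) f) = f := by
  simpa using translation_neg_translation (-ζ) f

end

theorem monomial_one_mem_ker_eval_zero_pow {σ R : Type*} [CommSemiring R] (α : σ →₀ ℕ) :
    monomial α (1 : R) ∈ RingHom.ker (eval (0 : σ → R)) ^ α.degree := by
  rw [monomial_eq, C_1, one_mul, Finsupp.prod, Finsupp.degree_apply,
    ← Finset.prod_pow_eq_pow_sum]
  exact Ideal.prod_mem_prod fun i _ => Ideal.pow_mem_pow (by simp [RingHom.mem_ker]) _

theorem isCoprime_ker_eval {σ K : Type*} [Field K] {ζ η : σ → K} (h : ζ ≠ η) :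
    IsCoprime (RingHom.ker (eval ζ)) (RingHom.ker (eval η)) := by
  have hmax : ∀ x : σ → K, (RingHom.ker (eval x)).IsMaximal := fun x =>
    RingHom.ker_isMaximal_of_surjective _ fun a => ⟨C a, eval_C a⟩
  obtain ⟨i, hi⟩ := Function.ne_iff.mp h
  have := hmax ζ
  have := hmax η
  refine Ideal.isCoprime_of_isMaximal fun he => hi ?_
  have : X i - C (ζ i) ∈ RingHom.ker (eval η) := he ▸ by simp [RingHom.mem_ker]
  simpa [RingHom.mem_ker, sub_eq_zero, eq_comm] using this

variable {σ k K : Type*} [Field k] [Field K] [Algebra k K]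

theorem finite_zeroLocus (I : Ideal (MvPolynomial σ k))
    [FiniteDimensional k (MvPolynomial σ k ⧸ I)] : (zeroLocus K I).Finite := by
  let e : zeroLocus K I → (MvPolynomial σ k ⧸ I →ₐ[k] K) := fun ζ =>
    Ideal.Quotient.liftₐ I (aeval ζ.1) (mem_zeroLocus_iff.mp ζ.2)
  refine Set.finite_coe_iff.mp (Finite.of_injective e fun ζ η h => ?_)
  ext i
  have hcomp := congr(($h).comp (Ideal.Quotient.mkₐ k I) (X i))
  simp only [e, Ideal.Quotient.liftₐ_comp] at hcomp
  simpa using hcomp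

theorem zeroLocus_nonempty [IsAlgClosed K] [Finite σ] {I : Ideal (MvPolynomial σ k)}
    (hI : I ≠ ⊤) : (zeroLocus K I).Nonempty := by
  refine Set.nonempty_iff_ne_empty.mpr fun h => hI (Ideal.radical_eq_top.mp ?_)
  rw [← vanishingIdeal_zeroLocus_eq_radical (K := K), h, vanishingIdeal_empty]

end MvPolynomial

namespace Submodule

variable {K V M ι : Type*} [Field K] [AddCommGroup V] [Module K V] [AddCommGroup M] [Module K M]

theorem finiteDimensional_comap_dualAnnihilator {B : M →ₗ[K] Module.Dual K V}
    (hB : Function.Injective B) (W : Submodule K V) [FiniteDimensional K (V ⧸ W)] :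
    FiniteDimensional K (W.dualAnnihilator.comap B) := by
  have : FiniteDimensional K W.dualAnnihilator :=
    Module.Finite.equiv W.dualQuotEquivDualAnnihilator
  exact FiniteDimensional.of_injective (V₂ := W.dualAnnihilator)
    (B.submoduleComap W.dualAnnihilator) fun x y h => Subtype.ext (hB (Subtype.ext_iff.mp h))

theorem finiteDimensional_quotient_of_mem_iff (W : Submodule K V) (B : ι → M →ₗ[K] V →ₗ[K] K)
    (Z : Finset ι) (Q : ι → Submodule K M) (hQ : ∀ i ∈ Z, FiniteDimensional K (Q i))
    (hW : ∀ v, v ∈ W ↔ ∀ i ∈ Z, ∀ q ∈ Q i, B i q v = 0) : FiniteDimensional K (V ⧸ W) := by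
  have (i : Z) : FiniteDimensional K (Q i) := hQ i i.2
  let Φ : V →ₗ[K] (i : Z) → Module.Dual K (Q i) :=
    LinearMap.pi fun i => (B i).flip.compl₂ (Q i).subtype
  have hker : LinearMap.ker Φ = W := by
    ext v
    simp [Φ, hW, funext_iff, LinearMap.ext_iff]
  exact Module.Finite.equiv ((quotEquivOfEq _ _ hker.symm).trans Φ.quotKerEquivRange).symm

end Submodule

section DifferentialOperators

variable {s : ℕ}

theorem prod_factorial_ne_zero (α : Fin s →₀ ℕ) : ∏ j, ((α j)! : ℂ) ≠ 0 :=
  Finset.prod_ne_zero_iff.mpr fun _ _ => Nat.cast_ne_zero.mpr (Nat.factorial_ne_zero _)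

theorem DOp_eq_sum (β : Fin s →₀ ℕ) (f : MvPolynomial (Fin s) ℂ) :
    DOp β f = (AddMonoidAlgebra.coeff f).sum fun δ c =>
      monomial (δ - β) (c * ∏ j, ((δ j).descFactorial (β j) : ℂ)) := by
  rw [sum_def]
  rfl

theorem DOp_add (β : Fin s →₀ ℕ) (f g : MvPolynomial (Fin s) ℂ) :
    DOp β (f + g) = DOp β f + DOp β g := by
  simp only [DOp_eq_sum, AddMonoidAlgebra.coeff_add]
  exact Finsupp.sum_add_index' (by simp) fun _ _ _ => by simp [add_mul]

theorem DOp_smul (β : Fin s →₀ ℕ) (c : ℂ) (f : MvPolynomial (Fin s) ℂ) :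
    DOp β (c • f) = c • DOp β f := by
  simp only [DOp_eq_sum, AddMonoidAlgebra.coeff_smul]
  rw [Finsupp.sum_smul_index (by simp), Finsupp.smul_sum]
  exact Finsupp.sum_congr fun _ _ => by simp [mul_assoc, smul_monomial]

theorem DOp_monomial (β α : Fin s →₀ ℕ) (a : ℂ) :
    DOp β (monomial α a) = monomial (α - β) (a * ∏ j, ((α j).descFactorial (β j) : ℂ)) := by
  rcases eq_or_ne a 0 with rfl | ha
  · simp [DOp]
  · rw [DOp, support_monomial, if_neg ha, Finset.sum_singleton, coeff_monomial, if_pos rfl]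

theorem prod_descFactorial_eq_zero {β α : Fin s →₀ ℕ} (h : ¬β ≤ α) :
    ∏ j, ((α j).descFactorial (β j) : ℂ) = 0 := by
  obtain ⟨j, hj⟩ : ∃ j, α j < β j := by simpa [Finsupp.le_def] using h
  exact Finset.prod_eq_zero (Finset.mem_univ j) (by simp [Nat.descFactorial_eq_zero_iff_lt.mpr hj])

theorem DOp_zero (f : MvPolynomial (Fin s) ℂ) : DOp 0 f = f := by
  induction f using MvPolynomial.induction_on' with
  | monomial α a => simp [DOp_monomial]
  | add f g hf hg => rw [DOp_add, hf, hg]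

theorem DOp_add_single (β : Fin s →₀ ℕ) (i : Fin s) (f : MvPolynomial (Fin s) ℂ) :
    DOp (β + Finsupp.single i 1) f = DOp β (pderiv i f) := by
  induction f using MvPolynomial.induction_on' with
  | add f g hf hg => rw [map_add, DOp_add, DOp_add, hf, hg]
  | monomial α a =>
    have hcoord (j : Fin s) :
        ((α j).descFactorial ((β + Finsupp.single i 1 : Fin s →₀ ℕ) j) : ℂ) =
          (if j = i then (α i : ℂ) else 1) *
            ((α - Finsupp.single i 1 : Fin s →₀ ℕ) j).descFactorial (β j) := by
      rcases eq_or_ne j i with rfl | hj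
      · simp only [Finsupp.add_apply, Finsupp.tsub_apply, Finsupp.single_eq_same, if_true]
        rcases α j with _ | n
        · simp
        · rw [Nat.succ_descFactorial_succ]
          simp
      · simp [hj]
    rw [pderiv_monomial, DOp_monomial, DOp_monomial, tsub_add_eq_tsub_tsub_swap]
    simp only [hcoord, Finset.prod_mul_distrib, Finset.prod_ite_eq', Finset.mem_univ, if_true]
    ring_nf

theorem DOp_translation (ζ : Fin s → ℂ) (β : Fin s →₀ ℕ) (f : MvPolynomial (Fin s) ℂ) :
    DOp β (translation ζ f) = translation ζ (DOp β f) := by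
  classical
  obtain ⟨m, rfl⟩ := Multiset.toFinsupp.surjective β
  induction m using Multiset.induction_on generalizing f with
  | empty => simp [DOp_zero]
  | cons i m ih =>
    rw [← Multiset.singleton_add, map_add, Multiset.toFinsupp_singleton, add_comm,
      DOp_add_single, DOp_add_single, pderiv_translation, ih]

theorem coeff_zero_DOp (β : Fin s →₀ ℕ) (f : MvPolynomial (Fin s) ℂ) :
    coeff 0 (DOp β f) = coeff β f * ∏ j, ((β j)! : ℂ) := by
  induction f using MvPolynomial.induction_on' with
  | add f g hf hg => rw [DOp_add, coeff_add, hf, hg, coeff_add, add_mul]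
  | monomial α a =>
    rw [DOp_monomial, coeff_monomial, coeff_monomial]
    rcases eq_or_ne α β with rfl | hne
    · simp [Nat.descFactorial_self]
    · rw [if_neg hne, zero_mul, ite_eq_right_iff]
      intro h
      rw [prod_descFactorial_eq_zero fun hle => hne
        (le_antisymm (tsub_eq_zero_iff_le.mp h) hle), mul_zero]

theorem polyD_eq_sum (q f : MvPolynomial (Fin s) ℂ) :
    polyD q f = (AddMonoidAlgebra.coeff q).sum fun β c => c • DOp β f := by
  rw [sum_def]
  rfl

theorem polyD_add_left (q r f : MvPolynomial (Fin s) ℂ) :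
    polyD (q + r) f = polyD q f + polyD r f := by
  simp only [polyD_eq_sum, AddMonoidAlgebra.coeff_add]
  exact Finsupp.sum_add_index' (by simp) fun _ _ _ => add_smul _ _ _

theorem polyD_smul_left (c : ℂ) (q f : MvPolynomial (Fin s) ℂ) :
    polyD (c • q) f = c • polyD q f := by
  simp only [polyD_eq_sum, AddMonoidAlgebra.coeff_smul]
  rw [Finsupp.sum_smul_index (by simp), Finsupp.smul_sum]
  exact Finsupp.sum_congr fun _ _ => mul_smul _ _ _

theorem polyD_add_right (q f g : MvPolynomial (Fin s) ℂ) :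
    polyD q (f + g) = polyD q f + polyD q g := by
  simp only [polyD, DOp_add, smul_add, Finset.sum_add_distrib]

theorem polyD_smul_right (q : MvPolynomial (Fin s) ℂ) (c : ℂ) (f : MvPolynomial (Fin s) ℂ) :
    polyD q (c • f) = c • polyD q f := by
  simp only [polyD, DOp_smul, Finset.smul_sum, smul_comm c]

theorem polyD_monomial_left (β : Fin s →₀ ℕ) (c : ℂ) (f : MvPolynomial (Fin s) ℂ) :
    polyD (monomial β c) f = c • DOp β f := by
  rcases eq_or_ne c 0 with rfl | hc
  · simp [polyD]
  · rw [polyD, support_monomial, if_neg hc, Finset.sum_singleton, coeff_monomial, if_pos rfl]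

theorem polyD_one_left (f : MvPolynomial (Fin s) ℂ) : polyD 1 f = f := by
  rw [← C_1, C_apply, polyD_monomial_left, DOp_zero, one_smul]

theorem polyD_translation (ζ : Fin s → ℂ) (q f : MvPolynomial (Fin s) ℂ) :
    polyD q (translation ζ f) = translation ζ (polyD q f) := by
  simp only [polyD, DOp_translation, map_sum, map_smul]

end DifferentialOperators

section Conditions

variable {s : ℕ}

noncomputable def evalPolyD (ζ : Fin s → ℂ) :
    MvPolynomial (Fin s) ℂ →ₗ[ℂ] MvPolynomial (Fin s) ℂ →ₗ[ℂ] ℂ :=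
  LinearMap.mk₂ ℂ (fun q f => eval ζ (polyD q f))
    (fun q r f => by rw [polyD_add_left, map_add])
    (fun c q f => by rw [polyD_smul_left, smul_eval, smul_eq_mul])
    (fun q f g => by rw [polyD_add_right, map_add])
    (fun c q f => by rw [polyD_smul_right, smul_eval, smul_eq_mul])

theorem evalPolyD_apply (ζ : Fin s → ℂ) (q f : MvPolynomial (Fin s) ℂ) :
    evalPolyD ζ q f = eval ζ (polyD q f) :=
  rfl

theorem evalPolyD_eq_evalPolyD_zero_translation (ζ : Fin s → ℂ) (q f : MvPolynomial (Fin s) ℂ) :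
    evalPolyD ζ q f = evalPolyD 0 q (translation ζ f) := by
  rw [evalPolyD_apply, evalPolyD_apply, polyD_translation, eval_translation, zero_add]

theorem evalPolyD_zero_apply (q f : MvPolynomial (Fin s) ℂ) :
    evalPolyD 0 q f = ∑ β ∈ q.support, coeff β q * coeff β f * ∏ j, ((β j)! : ℂ) := by
  rw [evalPolyD_apply, eval_zero, constantCoeff_eq, polyD, coeff_sum]
  simp only [coeff_smul, coeff_zero_DOp, smul_eq_mul, mul_assoc]

theorem evalPolyD_zero_monomial (q : MvPolynomial (Fin s) ℂ) (α : Fin s →₀ ℕ) (a : ℂ) :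
    evalPolyD 0 q (monomial α a) = coeff α q * a * ∏ j, ((α j)! : ℂ) := by
  rw [evalPolyD_zero_apply]
  simp only [coeff_monomial, mul_ite, ite_mul, mul_zero, zero_mul, Finset.sum_ite_eq,
    mem_support_iff, ite_not]
  split_ifs with h <;> simp [h]

theorem evalPolyD_one_left (ζ : Fin s → ℂ) (f : MvPolynomial (Fin s) ℂ) :
    evalPolyD ζ 1 f = eval ζ f := by
  rw [evalPolyD_apply, polyD_one_left]

theorem evalPolyD_one_right (ζ : Fin s → ℂ) (q : MvPolynomial (Fin s) ℂ) :
    evalPolyD ζ q 1 = coeff 0 q := by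
  rw [evalPolyD_eq_evalPolyD_zero_translation, map_one, ← C_1, C_apply, evalPolyD_zero_monomial]
  simp

theorem evalPolyD_zero_polyD (p q f : MvPolynomial (Fin s) ℂ) :
    evalPolyD 0 (polyD p q) f = evalPolyD 0 q (p * f) := by
  induction p using MvPolynomial.induction_on' with
  | add p₁ p₂ h₁ h₂ => rw [polyD_add_left, map_add, LinearMap.add_apply, h₁, h₂, add_mul, map_add]
  | monomial β b =>
  induction q using MvPolynomial.induction_on' with
  | add q₁ q₂ h₁ h₂ => rw [polyD_add_right, map_add, LinearMap.add_apply, h₁, h₂, map_add,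
      LinearMap.add_apply]
  | monomial γ c =>
  induction f using MvPolynomial.induction_on' with
  | add f₁ f₂ h₁ h₂ => rw [map_add, h₁, h₂, mul_add, map_add]
  | monomial α a =>
    rw [polyD_monomial_left, DOp_monomial, smul_monomial, monomial_mul,
      evalPolyD_zero_monomial, evalPolyD_zero_monomial, coeff_monomial, coeff_monomial]
    by_cases hβγ : β ≤ γ
    · by_cases h : γ = β + α
      · subst h
        have hfact (j : Fin s) : ((β + α) j).descFactorial (β j) * (α j)! = ((β + α) j)! := by
          rw [mul_comm, ← Nat.factorial_mul_descFactorial (by simp : β j ≤ (β + α) j)]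
          simp
        simp only [add_tsub_cancel_left, if_true, smul_eq_mul, ← hfact, Nat.cast_mul,
          Finset.prod_mul_distrib]
        ring
      · rw [if_neg fun h' => h (by rw [← h', add_tsub_cancel_of_le hβγ]), if_neg h]
        simp
    · rw [prod_descFactorial_eq_zero hβγ, if_neg fun h : γ = β + α => hβγ (h ▸ le_self_add)]
      simp

theorem evalPolyD_polyD (ζ : Fin s → ℂ) (p q f : MvPolynomial (Fin s) ℂ) :
    evalPolyD ζ (polyD p q) f = evalPolyD ζ q (translation (-ζ) p * f) := by
  rw [evalPolyD_eq_evalPolyD_zero_translation ζ (polyD p q), evalPolyD_zero_polyD,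
    evalPolyD_eq_evalPolyD_zero_translation ζ q, map_mul (translation ζ),
    translation_translation_neg]

theorem evalPolyD_injective (ζ : Fin s → ℂ) : Function.Injective (evalPolyD ζ) := by
  rw [← LinearMap.ker_eq_bot, Submodule.eq_bot_iff]
  intro q hq
  ext α
  have := congr($hq (translation (-ζ) (monomial α 1)))
  rw [evalPolyD_eq_evalPolyD_zero_translation, translation_translation_neg,
    evalPolyD_zero_monomial] at this
  simpa [prod_factorial_ne_zero] using this

theorem exists_evalPolyD_zero_eq {N : ℕ} {μ : MvPolynomial (Fin s) ℂ →ₗ[ℂ] ℂ}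
    (hμ : ∀ g ∈ RingHom.ker (eval 0) ^ N, μ g = 0) : ∃ q, evalPolyD 0 q = μ := by
  let c (α : Fin s →₀ ℕ) : ℂ := μ (monomial α 1) / ∏ j, ((α j)! : ℂ)
  have hc : (Function.support c).Finite := by
    refine (Finsupp.finite_of_degree_lt N).subset fun α hα => ?_
    by_contra hN
    exact hα (by simp [c, hμ _ (Ideal.pow_le_pow_right (not_lt.mp hN)
      (monomial_one_mem_ker_eval_zero_pow α))])
  refine ⟨AddMonoidAlgebra.ofCoeff (Finsupp.ofSupportFinite c hc),
    (basisMonomials (Fin s) ℂ).ext fun α => ?_⟩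
  rw [coe_basisMonomials, evalPolyD_zero_monomial]
  change c α * 1 * _ = _
  simp [c, prod_factorial_ne_zero]

theorem exists_evalPolyD_eq {ζ : Fin s → ℂ} {N : ℕ} {l : MvPolynomial (Fin s) ℂ →ₗ[ℂ] ℂ}
    (hl : ∀ g ∈ RingHom.ker (eval ζ) ^ N, l g = 0) : ∃ q, evalPolyD ζ q = l := by
  have hmap : (RingHom.ker (eval 0)).map (translation (-ζ)) ≤ RingHom.ker (eval ζ) :=
    Ideal.map_le_iff_le_comap.mpr fun g hg => by simpa [RingHom.mem_ker] using hg
  obtain ⟨q, hq⟩ := exists_evalPolyD_zero_eq (μ := l ∘ₗ (translation (-ζ)).toLinearMap)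
    fun g hg => hl _ (Ideal.pow_right_mono hmap N
      (Ideal.map_pow (translation (-ζ)) _ N ▸ Ideal.mem_map_of_mem _ hg))
  exact ⟨q, LinearMap.ext fun f => by simp [evalPolyD_eq_evalPolyD_zero_translation ζ q, hq]⟩

end Conditions

section ConditionSpace

variable {s : ℕ} (I : Ideal (MvPolynomial (Fin s) ℂ))

noncomputable def conditionSpace (ζ : Fin s → ℂ) : Submodule ℂ (MvPolynomial (Fin s) ℂ) :=
  (I.restrictScalars ℂ).dualAnnihilator.comap (evalPolyD ζ)

variable {I} in
theorem mem_conditionSpace {ζ : Fin s → ℂ} {q : MvPolynomial (Fin s) ℂ} :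
    q ∈ conditionSpace I ζ ↔ ∀ f ∈ I, evalPolyD ζ q f = 0 :=
  Submodule.mem_dualAnnihilator _

theorem dInvariant_conditionSpace (ζ : Fin s → ℂ) : DInvariant (conditionSpace I ζ) :=
  fun p q hq => mem_conditionSpace.mpr fun f hf => by
    rw [evalPolyD_polyD]
    exact mem_conditionSpace.mp hq _ (I.mul_mem_left _ hf)

theorem one_mem_conditionSpace {ζ : Fin s → ℂ} (hζ : ζ ∈ zeroLocus ℂ I) :
    1 ∈ conditionSpace I ζ :=
  mem_conditionSpace.mpr fun f hf => by simpa [evalPolyD_one_left] using hζ f hf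

theorem finiteDimensional_conditionSpace [FiniteDimensional ℂ (MvPolynomial (Fin s) ℂ ⧸ I)]
    (ζ : Fin s → ℂ) : FiniteDimensional ℂ (conditionSpace I ζ) :=
  have := Module.Finite.equiv (Submodule.Quotient.restrictScalarsEquiv ℂ I).symm
  Submodule.finiteDimensional_comap_dualAnnihilator (evalPolyD_injective ζ) _

theorem mem_sup_pow_of_forall_evalPolyD_eq_zero {ζ : Fin s → ℂ} {f : MvPolynomial (Fin s) ℂ}
    (hf : ∀ q ∈ conditionSpace I ζ, evalPolyD ζ q f = 0) (N : ℕ) :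
    f ∈ I ⊔ RingHom.ker (eval ζ) ^ N := by
  rw [← Submodule.restrictScalars_mem ℂ, ← Subspace.dualAnnihilator_dualCoannihilator_eq
    (W := (I ⊔ RingHom.ker (eval ζ) ^ N).restrictScalars ℂ),
    Submodule.mem_dualCoannihilator]
  intro l hl
  rw [Submodule.mem_dualAnnihilator] at hl
  obtain ⟨q, rfl⟩ := exists_evalPolyD_eq fun g hg => hl g (Ideal.mem_sup_right hg)
  exact hf q (mem_conditionSpace.mpr fun g hg => hl g (Ideal.mem_sup_left hg))

theorem mem_of_forall_evalPolyD_eq_zero [FiniteDimensional ℂ (MvPolynomial (Fin s) ℂ ⧸ I)]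
    {f : MvPolynomial (Fin s) ℂ}
    (hf : ∀ ζ ∈ zeroLocus ℂ I, ∀ q ∈ conditionSpace I ζ, evalPolyD ζ q f = 0) : f ∈ I := by
  obtain ⟨N, hN⟩ := Ideal.exists_radical_pow_le_of_fg I (IsNoetherian.noetherian _)
  let Z := (finite_zeroLocus (K := ℂ) I).toFinset
  have hprod : ∏ ζ ∈ Z, RingHom.ker (eval ζ) ^ N ≤ I := by
    rw [Finset.prod_pow]
    refine le_trans (Ideal.pow_right_mono ?_ N) hN
    rw [← vanishingIdeal_zeroLocus_eq_radical (K := ℂ)]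
    refine Ideal.prod_le_inf.trans fun p hp x hx => ?_
    simpa using Submodule.mem_finsetInf.mp hp x (by simpa [Z] using hx)
  refine sup_le le_rfl hprod (Ideal.biInf_sup_le_sup_prod I
    (fun a _ b _ hab => (isCoprime_ker_eval hab).pow) ?_)
  simp only [Submodule.mem_iInf]
  exact fun ζ hζ => mem_sup_pow_of_forall_evalPolyD_eq_zero I
    (hf ζ (by simpa [Z] using hζ)) N

end ConditionSpace

theorem DInvariant.exists_mem_coeff_zero_ne_zero {s : ℕ}
    {Q : Submodule ℂ (MvPolynomial (Fin s) ℂ)} (hQ : DInvariant Q) (hne : Q ≠ ⊥) :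
    ∃ q ∈ Q, coeff 0 q ≠ 0 := by
  obtain ⟨p, hp, hp0⟩ := Submodule.exists_mem_ne_zero_of_ne_bot hne
  obtain ⟨β, hβ⟩ := support_nonempty.mpr hp0
  refine ⟨polyD (monomial β 1) p, hQ _ p hp, ?_⟩
  rw [polyD_monomial_left, one_smul, coeff_zero_DOp]
  exact mul_ne_zero (mem_support_iff.mp hβ) (prod_factorial_ne_zero β)

/-- Gröbner: an ideal `I ⊆ ℂ[z_1,…,z_s]` is zero dimensional (proper with
finite-dimensional quotient) if and only if membership in `I` is characterized by the
vanishing of finitely many `D`-invariant spaces of differential conditions at finitely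
many points. -/
theorem stmt5 {s : ℕ} (I : Ideal (MvPolynomial (Fin s) ℂ)) :
    (I ≠ ⊤ ∧ FiniteDimensional ℂ (MvPolynomial (Fin s) ℂ ⧸ I)) ↔
      ∃ Z : Finset (Fin s → ℂ), Z.Nonempty ∧
        ∃ Q : (Fin s → ℂ) → Submodule ℂ (MvPolynomial (Fin s) ℂ),
          (∀ ζ ∈ Z, Q ζ ≠ ⊥ ∧ FiniteDimensional ℂ (Q ζ) ∧ DInvariant (Q ζ)) ∧
          ∀ f : MvPolynomial (Fin s) ℂ,
            f ∈ I ↔ ∀ ζ ∈ Z, ∀ q ∈ Q ζ, MvPolynomial.eval ζ (polyD q f) = 0 := by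
  constructor
  · rintro ⟨hI, hfd⟩
    refine ⟨(finite_zeroLocus I).toFinset, by simpa using zeroLocus_nonempty hI, conditionSpace I,
      fun ζ hζ => ⟨?_, finiteDimensional_conditionSpace I ζ, dInvariant_conditionSpace I ζ⟩,
      fun f => ⟨fun hf ζ _ q hq => mem_conditionSpace.mp hq f hf, fun hf => ?_⟩⟩
    · have h1 := one_mem_conditionSpace I (by simpa using hζ)
      exact (Submodule.ne_bot_iff _).mpr ⟨1, h1, one_ne_zero⟩
    · exact mem_of_forall_evalPolyD_eq_zero I fun ζ hζ => hf ζ (by simpa using hζ)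
  · rintro ⟨Z, ⟨ζ, hζ⟩, Q, hQ, hI⟩
    refine ⟨fun htop => ?_, ?_⟩
    · obtain ⟨q, hqQ, hq⟩ := (hQ ζ hζ).2.2.exists_mem_coeff_zero_ne_zero (hQ ζ hζ).1
      have h1 := (hI 1).mp (htop ▸ Submodule.mem_top) ζ hζ q hqQ
      rw [← evalPolyD_apply, evalPolyD_one_right] at h1
      exact hq h1
    · have := (I.restrictScalars ℂ).finiteDimensional_quotient_of_mem_iff evalPolyD Z Q
        (fun ζ hζ => (hQ ζ hζ).2.1) hI
      exact Module.Finite.equiv (Submodule.Quotient.restrictScalarsEquiv ℂ I)
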